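/- Let ω ∈ ℝ and K, T > 0 satisfy ω > 2KT, let μ0 ∈ (0,1/2) be such that f̄ attains its minimum over [0,1] exactly at μ0 and μ1 := 1−μ0, and set f(s) := f̄(s) − f̄(μ0). Let y0 < y1, let ε > 0, and let c : [y0,y1] → [0,1] be continuously differentiable. Then ∫_{y0}^{y1} ( (1/ε)·f(c(y)) + ε·c′(y)² ) dy ≥ 2·d_I(c(y0), c(y1)). -/

import Mathlib

/-!
Pointwise AM–GM gives `2 √(f(c)) |c'| ≤ f(c)/ε + ε c'²`, so the energy dominates twice the
weighted length `∫ √(f(c)) |c'|` of the path `c`. Reparametrising `c` affinely over `[0,1]` makes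
it a competitor in the infimum defining `d_I`, so that length is at least `d_I(c(y0), c(y1))`.
-/

/-- The chemical free energy density `f̄(s) = ω s(1-s) + K T (s log s + (1-s) log (1-s))`.
Since `Real.log 0 = 0`, this formula automatically realizes the continuous extension
`f̄(0) = f̄(1) = 0`. -/
noncomputable def fbar (ω K T : ℝ) (s : ℝ) : ℝ :=
  ω * s * (1 - s) + K * T * (s * Real.log s + (1 - s) * Real.log (1 - s))

/-- The geodesic distance on `[0,1]` associated with the well potential `f`:
`d_I(s,s') = inf { ∫₀¹ √(f(ψ(t))) |ψ'(t)| dt : ψ ∈ C¹([0,1],[0,1]), ψ(0)=s, ψ(1)=s' }`. -/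
noncomputable def dI (f : ℝ → ℝ) (s s' : ℝ) : ℝ :=
  sInf { v : ℝ | ∃ ψ : ℝ → ℝ, ContDiffOn ℝ 1 ψ (Set.Icc 0 1) ∧
    (∀ t ∈ Set.Icc (0 : ℝ) 1, ψ t ∈ Set.Icc (0 : ℝ) 1) ∧ ψ 0 = s ∧ ψ 1 = s' ∧
    v = ∫ t in (0 : ℝ)..1, Real.sqrt (f (ψ t)) * |derivWithin ψ (Set.Icc 0 1) t| }

open Set

theorem continuous_fbar (ω K T : ℝ) : Continuous (fbar ω K T) := by
  unfold fbar; fun_prop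

theorem apply_le_apply_of_lt_off_wells {f : ℝ → ℝ} {μ0 : ℝ} (hval : f μ0 = f (1 - μ0))
    (hmin : ∀ s ∈ Icc (0 : ℝ) 1, s ≠ μ0 → s ≠ 1 - μ0 → f μ0 < f s)
    {s : ℝ} (hs : s ∈ Icc (0 : ℝ) 1) : f μ0 ≤ f s := by
  rcases eq_or_ne s μ0 with rfl | h0
  · rfl
  rcases eq_or_ne s (1 - μ0) with rfl | h1
  · exact hval.le
  · exact (hmin s hs h0 h1).le

theorem two_mul_sqrt_mul_abs_le {F ε : ℝ} (hF : 0 ≤ F) (hε : 0 < ε) (d : ℝ) :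
    2 * (√F * |d|) ≤ 1 / ε * F + ε * d ^ 2 := by
  have hsq : 0 ≤ (√F - ε * |d|) ^ 2 := sq_nonneg _
  have hexpand : (1 / ε * F + ε * d ^ 2) * ε = √F ^ 2 + (ε * |d|) ^ 2 := by
    rw [Real.sq_sqrt hF, mul_pow, sq_abs]
    field_simp
  nlinarith

section Paths

variable {a b : ℝ} {c : ℝ → ℝ}

theorem mapsTo_affine_Icc (hab : a ≤ b) :
    MapsTo (fun t : ℝ => a + (b - a) * t) (Icc 0 1) (Icc a b) := fun t ht => by
  constructor <;> nlinarith [ht.1, ht.2]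

theorem derivWithin_comp_affine_Icc (hab : a < b) (hc : DifferentiableOn ℝ c (Icc a b))
    {t : ℝ} (ht : t ∈ Icc (0 : ℝ) 1) :
    derivWithin (fun t => c (a + (b - a) * t)) (Icc 0 1) t
      = (b - a) * derivWithin c (Icc a b) (a + (b - a) * t) := by
  have hmaps := mapsTo_affine_Icc hab.le
  have hc' := (hc _ (hmaps ht)).hasDerivWithinAt
  have haff : HasDerivWithinAt (fun t : ℝ => a + (b - a) * t) (b - a) (Icc 0 1) t := by
    simpa using (((hasDerivAt_id t).const_mul (b - a)).const_add a).hasDerivWithinAt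
  exact ((hc'.comp t haff hmaps).derivWithin (uniqueDiffOn_Icc one_pos t ht)).trans (mul_comm _ _)

theorem dI_le_integral_sqrt_mul_abs_derivWithin (f : ℝ → ℝ) (hab : a < b)
    (hc : ContDiffOn ℝ 1 c (Icc a b)) (hc01 : MapsTo c (Icc a b) (Icc 0 1)) :
    dI f (c a) (c b) ≤ ∫ y in a..b, √(f (c y)) * |derivWithin c (Icc a b) y| := by
  set g : ℝ → ℝ := fun y => √(f (c y)) * |derivWithin c (Icc a b) y|
  have hmaps := mapsTo_affine_Icc hab.le
  have hlength : (∫ t in (0 : ℝ)..1, √(f (c (a + (b - a) * t))) *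
      |derivWithin (fun t => c (a + (b - a) * t)) (Icc 0 1) t|) = ∫ y in a..b, g y := by
    have hpull : (∫ t in (0 : ℝ)..1, √(f (c (a + (b - a) * t))) *
        |derivWithin (fun t => c (a + (b - a) * t)) (Icc 0 1) t|)
          = (b - a) • ∫ t in (0 : ℝ)..1, g (a + (b - a) * t) := by
      rw [smul_eq_mul, ← intervalIntegral.integral_const_mul]
      refine intervalIntegral.integral_congr fun t ht => ?_
      rw [uIcc_of_le zero_le_one] at ht
      simp only [g, derivWithin_comp_affine_Icc hab (hc.differentiableOn one_ne_zero) ht,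
        abs_mul, abs_of_pos (sub_pos.2 hab)]
      ring
    rw [hpull, intervalIntegral.smul_integral_comp_add_mul]
    simp
  have haff : ContDiffOn ℝ 1 (fun t : ℝ => a + (b - a) * t) (Icc 0 1) := by fun_prop
  refine csInf_le ⟨0, ?_⟩ ⟨_, hc.comp haff hmaps, fun t ht => hc01 (hmaps ht), by simp, by simp,
    hlength.symm⟩
  rintro _ ⟨ψ, -, -, -, -, rfl⟩
  exact intervalIntegral.integral_nonneg zero_le_one fun t _ => by positivity

theorem two_mul_dI_le_integral_energy {f : ℝ → ℝ} (hf : ContinuousOn f (Icc 0 1))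
    (hf0 : ∀ s ∈ Icc (0 : ℝ) 1, 0 ≤ f s) (hab : a < b) {ε : ℝ} (hε : 0 < ε)
    (hc : ContDiffOn ℝ 1 c (Icc a b)) (hc01 : MapsTo c (Icc a b) (Icc 0 1)) :
    2 * dI f (c a) (c b) ≤
      ∫ y in a..b, (1 / ε * f (c y) + ε * derivWithin c (Icc a b) y ^ 2) := by
  have hfc : ContinuousOn (fun y => f (c y)) (Icc a b) := hf.comp hc.continuousOn hc01
  have hc' : ContinuousOn (derivWithin c (Icc a b)) (Icc a b) :=
    hc.continuousOn_derivWithin (uniqueDiffOn_Icc hab) le_rfl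
  have hlength_int : IntervalIntegrable (fun y => √(f (c y)) * |derivWithin c (Icc a b) y|)
      MeasureTheory.volume a b :=
    (hfc.sqrt.mul hc'.abs).intervalIntegrable_of_Icc hab.le
  have henergy_int : IntervalIntegrable
      (fun y => 1 / ε * f (c y) + ε * derivWithin c (Icc a b) y ^ 2) MeasureTheory.volume a b :=
    ((hfc.const_smul (1 / ε)).add ((hc'.pow 2).const_smul ε)).intervalIntegrable_of_Icc hab.le
  calc 2 * dI f (c a) (c b)
      ≤ 2 * ∫ y in a..b, √(f (c y)) * |derivWithin c (Icc a b) y| := by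
        gcongr; exact dI_le_integral_sqrt_mul_abs_derivWithin f hab hc hc01
    _ = ∫ y in a..b, 2 * (√(f (c y)) * |derivWithin c (Icc a b) y|) :=
        (intervalIntegral.integral_const_mul _ _).symm
    _ ≤ _ := intervalIntegral.integral_mono_on hab.le (hlength_int.const_mul 2) henergy_int
        fun y hy => two_mul_sqrt_mul_abs_le (hf0 _ (hc01 hy)) hε _

end Paths

theorem one_dim_energy_bound_general (ω K T : ℝ)
    (μ0 : ℝ)
    (hval : fbar ω K T μ0 = fbar ω K T (1 - μ0))
    (hmin : ∀ s ∈ Set.Icc (0 : ℝ) 1, s ≠ μ0 → s ≠ 1 - μ0 →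
      fbar ω K T μ0 < fbar ω K T s)
    (y0 y1 : ℝ) (hy : y0 < y1) (ε : ℝ) (hε : 0 < ε) (c : ℝ → ℝ)
    (hc : ContDiffOn ℝ 1 c (Set.Icc y0 y1))
    (hc01 : ∀ y ∈ Set.Icc y0 y1, c y ∈ Set.Icc (0 : ℝ) 1) :
    2 * dI (fun s => fbar ω K T s - fbar ω K T μ0) (c y0) (c y1) ≤
      ∫ y in y0..y1,
        ((1 / ε) * (fbar ω K T (c y) - fbar ω K T μ0)
          + ε * (derivWithin c (Set.Icc y0 y1) y) ^ 2) :=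
  two_mul_dI_le_integral_energy ((continuous_fbar ω K T).sub continuous_const).continuousOn
    (fun _ hs => sub_nonneg.2 (apply_le_apply_of_lt_off_wells hval hmin hs)) hy hε hc hc01

/-- One-dimensional Modica–Mortola bound: for a `C¹` function `c : [y0,y1] → [0,1]`,
`∫ ( (1/ε) f(c) + ε (c')² ) ≥ 2 d_I(c(y0), c(y1))`, where `f = f̄ - f̄(μ0)`. -/
theorem one_dim_energy_bound (ω K T : ℝ) (hK : 0 < K) (hT : 0 < T) (hω : 2 * K * T < ω)
    (μ0 : ℝ) (hμ0 : μ0 ∈ Set.Ioo (0 : ℝ) (1 / 2))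
    (hval : fbar ω K T μ0 = fbar ω K T (1 - μ0))
    (hmin : ∀ s ∈ Set.Icc (0 : ℝ) 1, s ≠ μ0 → s ≠ 1 - μ0 →
      fbar ω K T μ0 < fbar ω K T s)
    (y0 y1 : ℝ) (hy : y0 < y1) (ε : ℝ) (hε : 0 < ε) (c : ℝ → ℝ)
    (hc : ContDiffOn ℝ 1 c (Set.Icc y0 y1))
    (hc01 : ∀ y ∈ Set.Icc y0 y1, c y ∈ Set.Icc (0 : ℝ) 1) :
    2 * dI (fun s => fbar ω K T s - fbar ω K T μ0) (c y0) (c y1) ≤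
      ∫ y in y0..y1,
        ((1 / ε) * (fbar ω K T (c y) - fbar ω K T μ0)
          + ε * (derivWithin c (Set.Icc y0 y1) y) ^ 2) :=
  one_dim_energy_bound_general ω K T μ0 hval hmin y0 y1 hy ε hε c hc hc01
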